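/- arXiv:2108.06757 — 5 statements merged into one kernel-verified Lean document; each statement's English description precedes it below -/
import Mathlib

section
/- Let S = S_1 ⊕ S_2 ⊕ ⋯ ⊕ S_k be a block-diagonal complex matrix of size n = n_1 + ⋯ + n_k, where each S_j ∈ ℂ^{n_j×n_j} has λ_j as its only eigenvalue and λ_1, …, λ_k are pairwise distinct complex numbers. Then a matrix Q ∈ O_n(ℂ) satisfies QᵀSQ = S if and only if Q = Q_1 ⊕ Q_2 ⊕ ⋯ ⊕ Q_k for some matrices Q_j ∈ O_{n_j}(ℂ) with Q_jᵀ S_j Q_j = S_j for every j. In particular the isotropy group Σ_S is isomorphic to the direct product of the isotropy groups Σ_{S_j}. -/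
/-!
An orthogonal `Q` satisfies `QᵀSQ = S` exactly when it commutes with `S`. Each off-diagonal
block `Y` of such a `Q` then intertwines two diagonal blocks, `S_j Y = Y S_l` with `j ≠ l`.
Writing `N = S_j - λ_j` (nilpotent, since `λ_j` is the only eigenvalue of `S_j`) this gives
`N ^ r Y = Y (S_l - λ_j) ^ r`; the left side vanishes for large `r`, while
`S_l - λ_j = (S_l - λ_l) + (λ_l - λ_j)` is a nilpotent plus a nonzero scalar, hence invertible.
So `Y = 0` and `Q` is block diagonal, and the isotropy conditions split blockwise.
-/

open Matrix Polynomial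

namespace Matrix

variable {K : Type*} [Field K]

theorem charpoly_eq_X_sub_C_pow_of_spectrum_eq_singleton [IsAlgClosed K]
    {m : Type*} [Fintype m] [DecidableEq m] {A : Matrix m m K} {μ : K}
    (h : spectrum K A = {μ}) : A.charpoly = (X - C μ) ^ Fintype.card m := by
  have hsplit : A.charpoly.Splits := IsAlgClosed.splits _
  have hroots : A.charpoly.roots = Multiset.replicate (Fintype.card m) μ := by
    refine Multiset.eq_replicate.mpr ⟨?_, fun r hr => ?_⟩
    · rw [splits_iff_card_roots.mp hsplit, charpoly_natDegree_eq_dim]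
    · have : r ∈ spectrum K A := mem_spectrum_iff_isRoot_charpoly.mpr (isRoot_of_mem_roots hr)
      rwa [h] at this
  rw [hsplit.eq_prod_roots_of_monic A.charpoly_monic, hroots, Multiset.map_replicate,
    Multiset.prod_replicate]

theorem isNilpotent_sub_smul_one_of_spectrum_eq_singleton [IsAlgClosed K]
    {m : Type*} [Fintype m] [DecidableEq m] {A : Matrix m m K} {μ : K}
    (h : spectrum K A = {μ}) : IsNilpotent (A - μ • 1) := by
  refine ⟨Fintype.card m, ?_⟩
  have hCH := A.aeval_self_charpoly
  rwa [charpoly_eq_X_sub_C_pow_of_spectrum_eq_singleton h, map_pow, map_sub, aeval_X, aeval_C,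
    Algebra.algebraMap_eq_smul_one] at hCH

theorem pow_mul_eq_mul_pow_of_mul_eq_mul {m n R : Type*} [Fintype m] [DecidableEq m]
    [Fintype n] [DecidableEq n] [Semiring R] {A : Matrix m m R} {B : Matrix n n R}
    {Y : Matrix m n R}
    (hY : A * Y = Y * B) (r : ℕ) : A ^ r * Y = Y * B ^ r := by
  induction r with
  | zero => simp
  | succ r ih => rw [pow_succ, Matrix.mul_assoc, hY, ← Matrix.mul_assoc, ih, Matrix.mul_assoc,
      ← pow_succ]

theorem eq_zero_of_mul_eq_mul_of_isNilpotent {m n : Type*} [Fintype m] [DecidableEq m]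
    [Fintype n] [DecidableEq n] {A : Matrix m m K} {B : Matrix n n K} {a b : K} (hab : a ≠ b)
    (hA : IsNilpotent (A - a • 1)) (hB : IsNilpotent (B - b • 1)) {Y : Matrix m n K}
    (hY : A * Y = Y * B) : Y = 0 := by
  obtain ⟨r, hr⟩ := hA
  have hunit : IsUnit (B - a • 1) := by
    have hsplit : B - a • 1 = (B - b • 1) + algebraMap K _ (b - a) := by
      rw [Algebra.algebraMap_eq_smul_one, sub_smul]; abel
    rw [hsplit]
    exact hB.isUnit_add_right_of_commute ((sub_ne_zero.mpr hab.symm).isUnit.map _)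
      (Algebra.commutes _ _).symm
  have hshift : (A - a • 1) * Y = Y * (B - a • 1) := by
    rw [Matrix.sub_mul, Matrix.mul_sub, hY, Matrix.smul_mul, Matrix.mul_smul, Matrix.one_mul,
      Matrix.mul_one]
  have hzero : Y * (B - a • 1) ^ r = 0 := by
    rw [← pow_mul_eq_mul_pow_of_mul_eq_mul hshift, hr, Matrix.zero_mul]
  have hdet : IsUnit ((B - a • 1) ^ r).det := (isUnit_iff_isUnit_det _).mp (hunit.pow r)
  rw [← mul_nonsing_inv_cancel_right _ Y hdet, hzero, Matrix.zero_mul]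

/-- The isotropy group `Σ_A` of `A` under orthogonal similarity `A ↦ QᵀAQ`. -/
def orthogonalIsotropy {n R : Type*} [Fintype n] [DecidableEq n] [Semiring R]
    (A : Matrix n n R) : Set (Matrix n n R) :=
  {Q | Qᵀ * Q = 1 ∧ Qᵀ * A * Q = A}

theorem transpose_mul_mul_eq_iff_mul_eq_mul {n R : Type*} [Fintype n] [DecidableEq n]
    [CommSemiring R] {Q A : Matrix n n R} (hQ : Qᵀ * Q = 1) :
    Qᵀ * A * Q = A ↔ A * Q = Q * A := by
  have hQ' : Q * Qᵀ = 1 := mul_eq_one_comm.mp hQ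
  constructor
  · intro h
    calc A * Q = Q * Qᵀ * A * Q := by rw [hQ', Matrix.one_mul]
      _ = Q * (Qᵀ * A * Q) := by simp only [Matrix.mul_assoc]
      _ = Q * A := by rw [h]
  · intro h
    rw [Matrix.mul_assoc, h, ← Matrix.mul_assoc, hQ, Matrix.one_mul]

section BlockDiagonal

variable {ι : Type*} [Fintype ι] [DecidableEq ι] {o : ι → Type*} [∀ i, Fintype (o i)]

theorem submatrix_sigmaMk_blockDiagonal'_mul {R : Type*} [Semiring R]
    (S : ∀ i, Matrix (o i) (o i) R) (Q : Matrix (Σ i, o i) (Σ i, o i) R) (i j : ι) :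
    (blockDiagonal' S * Q).submatrix (Sigma.mk i) (Sigma.mk j) =
      S i * Q.submatrix (Sigma.mk i) (Sigma.mk j) := by
  ext a b
  simp [mul_apply, Fintype.sum_sigma, blockDiagonal'_apply, dite_mul]

theorem submatrix_sigmaMk_mul_blockDiagonal' {R : Type*} [Semiring R]
    (S : ∀ i, Matrix (o i) (o i) R) (Q : Matrix (Σ i, o i) (Σ i, o i) R) (i j : ι) :
    (Q * blockDiagonal' S).submatrix (Sigma.mk i) (Sigma.mk j) =
      Q.submatrix (Sigma.mk i) (Sigma.mk j) * S j := by
  ext a b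
  simp [mul_apply, Fintype.sum_sigma, blockDiagonal'_apply, mul_dite]

variable [∀ i, DecidableEq (o i)]

theorem blockDiagonal'_mem_orthogonalIsotropy_iff {R : Type*} [Semiring R]
    {S Q : ∀ i, Matrix (o i) (o i) R} :
    blockDiagonal' Q ∈ orthogonalIsotropy (blockDiagonal' S) ↔
      ∀ i, Q i ∈ orthogonalIsotropy (S i) := by
  simp only [orthogonalIsotropy, Set.mem_ofPred_eq, blockDiagonal'_transpose,
    ← blockDiagonal'_mul, ← blockDiagonal'_one, blockDiagonal'_inj, funext_iff, Pi.one_apply,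
    forall_and]

theorem blockDiagonal'_blockDiag'_of_commute
    {S : ∀ i, Matrix (o i) (o i) K} {lam : ι → K} (hlam : Function.Injective lam)
    (hS : ∀ i, IsNilpotent (S i - lam i • 1)) {Q : Matrix (Σ i, o i) (Σ i, o i) K}
    (hQ : blockDiagonal' S * Q = Q * blockDiagonal' S) :
    blockDiagonal' (blockDiag' Q) = Q := by
  ext ⟨i, a⟩ ⟨j, b⟩
  obtain rfl | hij := eq_or_ne i j
  · rw [blockDiagonal'_apply_eq, blockDiag'_apply]
  · have hY : Q.submatrix (Sigma.mk i) (Sigma.mk j) = 0 :=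
      eq_zero_of_mul_eq_mul_of_isNilpotent (hlam.ne hij) (hS i) (hS j) <| by
        rw [← submatrix_sigmaMk_blockDiagonal'_mul, hQ, submatrix_sigmaMk_mul_blockDiagonal']
    rw [blockDiagonal'_apply_ne _ _ _ hij]
    exact (congr_fun₂ hY a b).symm

theorem blockDiagonal'_blockDiag'_of_mem_orthogonalIsotropy
    {S : ∀ i, Matrix (o i) (o i) K} {lam : ι → K} (hlam : Function.Injective lam)
    (hS : ∀ i, IsNilpotent (S i - lam i • 1)) {Q : Matrix (Σ i, o i) (Σ i, o i) K}
    (hQ : Q ∈ orthogonalIsotropy (blockDiagonal' S)) :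
    blockDiagonal' (blockDiag' Q) = Q :=
  blockDiagonal'_blockDiag'_of_commute hlam hS ((transpose_mul_mul_eq_iff_mul_eq_mul hQ.1).mp hQ.2)

end BlockDiagonal

end Matrix

/-- If `S = S_1 ⊕ ⋯ ⊕ S_k` where each `S_j` has `λ_j` as its only
eigenvalue and the `λ_j` are pairwise distinct, then an orthogonal `Q` satisfies
`QᵀSQ = S` iff `Q = Q_1 ⊕ ⋯ ⊕ Q_k` with each `Q_j` orthogonal and `Q_jᵀ S_j Q_j = S_j`.
In particular, the isotropy group `Σ_S` is isomorphic to the direct product of the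
isotropy groups `Σ_{S_j}`. -/
theorem stmt0 (k : ℕ) (n : Fin k → ℕ)
    (S : ∀ j, Matrix (Fin (n j)) (Fin (n j)) ℂ) (lam : Fin k → ℂ)
    (hdist : Function.Injective lam)
    (hspec : ∀ j, spectrum ℂ (S j) = {lam j}) :
    (∀ Q : Matrix (Σ j, Fin (n j)) (Σ j, Fin (n j)) ℂ,
      (Qᵀ * Q = 1 ∧
          Qᵀ * Matrix.blockDiagonal' S * Q = Matrix.blockDiagonal' S) ↔
        ∃ Qb : ∀ j, Matrix (Fin (n j)) (Fin (n j)) ℂ,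
          (∀ j, (Qb j)ᵀ * Qb j = 1 ∧ (Qb j)ᵀ * S j * Qb j = S j) ∧
            Q = Matrix.blockDiagonal' Qb) ∧
    ∃ f : Matrix (Σ j, Fin (n j)) (Σ j, Fin (n j)) ℂ →
        (∀ j, Matrix (Fin (n j)) (Fin (n j)) ℂ),
      Set.BijOn f
        {Q | Qᵀ * Q = 1 ∧
          Qᵀ * Matrix.blockDiagonal' S * Q = Matrix.blockDiagonal' S}
        {Qb | ∀ j, (Qb j)ᵀ * Qb j = 1 ∧ (Qb j)ᵀ * S j * Qb j = S j} ∧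
      ∀ Q₁ Q₂ : Matrix (Σ j, Fin (n j)) (Σ j, Fin (n j)) ℂ,
        (Q₁ᵀ * Q₁ = 1 ∧
          Q₁ᵀ * Matrix.blockDiagonal' S * Q₁ = Matrix.blockDiagonal' S) →
        (Q₂ᵀ * Q₂ = 1 ∧
          Q₂ᵀ * Matrix.blockDiagonal' S * Q₂ = Matrix.blockDiagonal' S) →
        f (Q₁ * Q₂) = fun j => f Q₁ j * f Q₂ j := by
  have hblock : ∀ Q ∈ orthogonalIsotropy (blockDiagonal' S), blockDiagonal' (blockDiag' Q) = Q :=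
    fun Q => blockDiagonal'_blockDiag'_of_mem_orthogonalIsotropy hdist
      fun j => isNilpotent_sub_smul_one_of_spectrum_eq_singleton (hspec j)
  have hchar : ∀ Q, Q ∈ orthogonalIsotropy (blockDiagonal' S) ↔
      ∃ Qb, (∀ j, Qb j ∈ orthogonalIsotropy (S j)) ∧ Q = blockDiagonal' Qb := by
    refine fun Q => ⟨fun hQ => ⟨blockDiag' Q, ?_, (hblock Q hQ).symm⟩, ?_⟩
    · rw [← blockDiagonal'_mem_orthogonalIsotropy_iff, hblock Q hQ]
      exact hQ
    · rintro ⟨Qb, hQb, rfl⟩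
      exact blockDiagonal'_mem_orthogonalIsotropy_iff.mpr hQb
  refine ⟨hchar, blockDiag', ?_, fun Q₁ Q₂ h₁ h₂ => ?_⟩
  · refine Set.InvOn.bijOn ⟨hblock, fun Qb _ => blockDiag'_blockDiagonal' Qb⟩ (fun Q hQ => ?_)
      fun Qb => blockDiagonal'_mem_orthogonalIsotropy_iff.mpr
    obtain ⟨Qb, hQb, rfl⟩ := (hchar Q).mp hQ
    rwa [blockDiag'_blockDiagonal']
  · rw [← hblock Q₁ h₁, ← hblock Q₂ h₂, ← blockDiagonal'_mul]
    simp only [blockDiag'_blockDiagonal']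
end

section
/- Fix λ ∈ ℂ, integers α_1 > α_2 > ⋯ > α_N ≥ 1 and m_1, …, m_N ≥ 1, set n := Σ_{r=1}^N α_r m_r, and let S := ⊕_{r=1}^N ⊕_{j=1}^{m_r} K_{α_r}(λ). Let F := ⊕_{r=1}^N E_{α_r}(I_{m_r}) and let 𝕏 := {X ∈ GL_n(ℂ) : X has form (0T0) and F Xᵀ F X = I_n}. Then 𝕏 is a group under matrix multiplication, and the isotropy group Σ_S = {Q ∈ O_n(ℂ) : QᵀSQ = S} is isomorphic, as a group, to 𝕏. -/
open Matrix

noncomputable section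

/-- Form (0T0): block matrix partitioned by Jordan structure `(α, m)` whose `(r,s)` block,
viewed as an `α r × α s` array of `m r × m s` blocks, is a rectangular block
upper-triangular Toeplitz matrix aligned to the top-right corner. -/
def IsForm0T0 {N : ℕ} (α m : Fin N → ℕ)
    (X : Matrix (Σ r : Fin N, Fin (α r) × Fin (m r)) (Σ r : Fin N, Fin (α r) × Fin (m r)) ℂ) :
    Prop :=
  ∃ A : ∀ r s : Fin N, ℕ → Matrix (Fin (m r)) (Fin (m s)) ℂ,
    ∀ (r s : Fin N) (i : Fin (α r)) (j : Fin (α s)) (a : Fin (m r)) (b : Fin (m s)),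
      X ⟨r, (i, a)⟩ ⟨s, (j, b)⟩ =
        if (i : ℕ) + (α s - min (α r) (α s)) ≤ (j : ℕ) then
          A r s ((j : ℕ) - (i : ℕ) - (α s - min (α r) (α s))) a b
        else 0

/-- `E_b(I_m)`: the `bm × bm` block matrix with `I_m` on the block anti-diagonal. -/
def revE (b m : ℕ) : Matrix (Fin b × Fin m) (Fin b × Fin m) ℂ :=
  Matrix.of fun p q => if (p.1 : ℕ) + (q.1 : ℕ) + 1 = b ∧ p.2 = q.2 then 1 else 0

/-- `F = ⊕_r E_{α r}(I_{m r})`. -/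
def bigF {N : ℕ} (α m : Fin N → ℕ) :
    Matrix (Σ r : Fin N, Fin (α r) × Fin (m r)) (Σ r : Fin N, Fin (α r) × Fin (m r)) ℂ :=
  Matrix.blockDiagonal' fun r => revE (α r) (m r)

/-- The `n × n` upper-triangular Jordan block `J_n(λ)`. -/
def Jmat (n : ℕ) (lam : ℂ) : Matrix (Fin n) (Fin n) ℂ :=
  Matrix.of fun i j => if (j : ℕ) = (i : ℕ) then lam else if (j : ℕ) = (i : ℕ) + 1 then 1 else 0

/-- The `n × n` backward identity matrix `E_n`. -/
def ErevC (n : ℕ) : Matrix (Fin n) (Fin n) ℂ :=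
  Matrix.of fun i j => if (i : ℕ) + (j : ℕ) + 1 = n then 1 else 0

/-- `P_n = (1/√2)(I + i E_n)`. -/
noncomputable def Pmat (n : ℕ) : Matrix (Fin n) (Fin n) ℂ :=
  (Real.sqrt 2 : ℂ)⁻¹ • (1 + Complex.I • ErevC n)

/-- `P_n⁻¹ = (1/√2)(I − i E_n)`. -/
noncomputable def PmatInv (n : ℕ) : Matrix (Fin n) (Fin n) ℂ :=
  (Real.sqrt 2 : ℂ)⁻¹ • (1 - Complex.I • ErevC n)

/-- The symmetric canonical form `K_n(λ) = P_n J_n(λ) P_n⁻¹` of a Jordan block. -/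
noncomputable def Kmat (n : ℕ) (lam : ℂ) : Matrix (Fin n) (Fin n) ℂ :=
  Pmat n * Jmat n lam * PmatInv n

/-- `T(A_0, …)`: the `β × β` block upper-triangular Toeplitz matrix with blocks `A_j`. -/
def blkToeplitz (β p q : ℕ) (A : ℕ → Matrix (Fin p) (Fin q) ℂ) :
    Matrix (Fin β × Fin p) (Fin β × Fin q) ℂ :=
  Matrix.of fun x y =>
    if (x.1 : ℕ) ≤ (y.1 : ℕ) then A ((y.1 : ℕ) - (x.1 : ℕ)) x.2 y.2 else 0

/-- The `(i,i)`-th `m r × m r` entry-block of the `(r,r)` diagonal block of `X`; for a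
matrix of form (0T0) this is the leading Toeplitz coefficient `A^{rr}_0`. -/
def diagLead {N : ℕ} (α m : Fin N → ℕ)
    (X : Matrix (Σ r : Fin N, Fin (α r) × Fin (m r)) (Σ r : Fin N, Fin (α r) × Fin (m r)) ℂ)
    (r : Fin N) (i : Fin (α r)) : Matrix (Fin (m r)) (Fin (m r)) ℂ :=
  Matrix.of fun a b => X ⟨r, (i, a)⟩ ⟨r, (i, b)⟩

/-- The space of skew-symmetric matrices commuting with `S`. -/
def skewCommSubmodule (ι : Type*) [Fintype ι] [DecidableEq ι] (S : Matrix ι ι ℂ) :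
    Submodule ℂ (Matrix ι ι ℂ) where
  carrier := {X | Xᵀ = -X ∧ X * S = S * X}
  add_mem' := by
    rintro a b ⟨ha1, ha2⟩ ⟨hb1, hb2⟩
    refine ⟨?_, ?_⟩
    · rw [Matrix.transpose_add, ha1, hb1, neg_add]
    · rw [add_mul, mul_add, ha2, hb2]
  zero_mem' := by
    refine ⟨?_, ?_⟩
    · simp
    · simp
  smul_mem' := by
    rintro c a ⟨h1, h2⟩
    refine ⟨?_, ?_⟩
    · rw [Matrix.transpose_smul, h1, smul_neg]
    · rw [Matrix.smul_mul, Matrix.mul_smul, h2]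

/-- The isotropy group (as a set) of `S` under orthogonal similarity. -/
def sigmaSet {ι : Type*} [Fintype ι] [DecidableEq ι] (S : Matrix ι ι ℂ) : Set (Matrix ι ι ℂ) :=
  {Q | Qᵀ * Q = 1 ∧ Qᵀ * S * Q = S}

lemma ErevC_mul_ErevC (n : ℕ) : ErevC n * ErevC n = 1 := by
  ext i j
  have hi := i.isLt
  have hj := j.isLt
  rw [Matrix.mul_apply]
  rw [Finset.sum_eq_single (⟨n - 1 - (i : ℕ), by omega⟩ : Fin n)]
  · simp only [ErevC, Matrix.of_apply, Matrix.one_apply]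
    split_ifs <;> simp_all [Fin.ext_iff] <;> omega
  · intro k _ hk
    have hk' : (k : ℕ) ≠ n - 1 - (i : ℕ) := fun h => hk (Fin.ext (by simpa using h))
    have := k.isLt
    simp only [ErevC, Matrix.of_apply]
    rw [if_neg (by omega)]
    ring
  · intro h
    exact absurd (Finset.mem_univ _) h

lemma ErevC_transpose (n : ℕ) : (ErevC n)ᵀ = ErevC n := by
  ext i j
  simp only [Matrix.transpose_apply, ErevC, Matrix.of_apply]
  split_ifs with h1 h2 <;> first | rfl | omega

lemma sqrt2_inv_sq : ((Real.sqrt 2 : ℂ))⁻¹ * ((Real.sqrt 2 : ℂ))⁻¹ = (2 : ℂ)⁻¹ := by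
  rw [← mul_inv, ← Complex.ofReal_mul, Real.mul_self_sqrt (by norm_num)]
  norm_num

lemma Pmat_mul_PmatInv (n : ℕ) : Pmat n * PmatInv n = 1 := by
  simp only [Pmat, PmatInv, Matrix.smul_mul, Matrix.mul_smul, smul_smul, mul_add, add_mul,
    mul_sub, sub_mul, Matrix.one_mul, Matrix.mul_one, ErevC_mul_ErevC, Complex.I_mul_I]
  have h2 : ((Real.sqrt 2 : ℂ)) ^ 2 = 2 := by
    rw [← Complex.ofReal_pow, Real.sq_sqrt (by norm_num)]; norm_num
  match_scalars <;> ring_nf <;> simp [inv_pow, h2, Complex.I_sq] <;> norm_num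


lemma sqrt2C_sq : ((Real.sqrt 2 : ℂ)) ^ 2 = 2 := by
  rw [← Complex.ofReal_pow, Real.sq_sqrt (by norm_num)]; norm_num

lemma PmatInv_mul_Pmat (n : ℕ) : PmatInv n * Pmat n = 1 := by
  simp only [Pmat, PmatInv, Matrix.smul_mul, Matrix.mul_smul, smul_smul, mul_add, add_mul,
    mul_sub, sub_mul, Matrix.one_mul, Matrix.mul_one, ErevC_mul_ErevC, Complex.I_mul_I]
  match_scalars <;> ring_nf <;> simp [inv_pow, sqrt2C_sq, Complex.I_sq] <;> (try norm_num) <;> (try ring)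

lemma Pmat_sq (n : ℕ) : Pmat n * Pmat n = Complex.I • ErevC n := by
  simp only [Pmat, PmatInv, Matrix.smul_mul, Matrix.mul_smul, smul_smul, mul_add, add_mul,
    mul_sub, sub_mul, Matrix.one_mul, Matrix.mul_one, ErevC_mul_ErevC, Complex.I_mul_I]
  match_scalars <;> ring_nf <;> simp [inv_pow, sqrt2C_sq, Complex.I_sq] <;> (try norm_num) <;> (try ring)

lemma PmatInv_sq (n : ℕ) : PmatInv n * PmatInv n = (-Complex.I) • ErevC n := by
  simp only [Pmat, PmatInv, Matrix.smul_mul, Matrix.mul_smul, smul_smul, mul_add, add_mul,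
    mul_sub, sub_mul, Matrix.one_mul, Matrix.mul_one, ErevC_mul_ErevC, Complex.I_mul_I]
  match_scalars <;> ring_nf <;> simp [inv_pow, sqrt2C_sq, Complex.I_sq] <;> (try norm_num) <;> (try ring)

lemma ErevC_comm_Pmat (n : ℕ) : ErevC n * Pmat n = Pmat n * ErevC n := by
  simp only [Pmat, Matrix.smul_mul, Matrix.mul_smul, mul_add, add_mul,
    Matrix.one_mul, Matrix.mul_one, ErevC_mul_ErevC]

lemma ErevC_comm_PmatInv (n : ℕ) : ErevC n * PmatInv n = PmatInv n * ErevC n := by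
  simp only [PmatInv, Matrix.smul_mul, Matrix.mul_smul, mul_sub, sub_mul,
    Matrix.one_mul, Matrix.mul_one, ErevC_mul_ErevC]

lemma Pmat_transpose (n : ℕ) : (Pmat n)ᵀ = Pmat n := by
  simp [Pmat, Matrix.transpose_add, Matrix.transpose_smul, ErevC_transpose]

lemma PmatInv_transpose (n : ℕ) : (PmatInv n)ᵀ = PmatInv n := by
  simp [PmatInv, Matrix.transpose_sub, Matrix.transpose_smul, ErevC_transpose]

def dbm {N : ℕ} (α m : Fin N → ℕ) (M : ∀ r : Fin N, Matrix (Fin (α r)) (Fin (α r)) ℂ) :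
    Matrix (Σ r : Fin N, Fin (α r) × Fin (m r)) (Σ r : Fin N, Fin (α r) × Fin (m r)) ℂ :=
  Matrix.blockDiagonal' fun r => Matrix.blockDiagonal fun _ : Fin (m r) => M r

lemma dbm_mul {N : ℕ} (α m : Fin N → ℕ) (M M' : ∀ r : Fin N, Matrix (Fin (α r)) (Fin (α r)) ℂ) :
    dbm α m M * dbm α m M' = dbm α m fun r => M r * M' r := by
  unfold dbm
  rw [← Matrix.blockDiagonal'_mul]
  have : (fun k : Fin N => (Matrix.blockDiagonal fun _ : Fin (m k) => M k) *
      Matrix.blockDiagonal fun _ : Fin (m k) => M' k)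
      = fun r : Fin N => Matrix.blockDiagonal fun _ : Fin (m r) => M r * M' r :=
    funext fun r => (Matrix.blockDiagonal_mul _ _).symm
  rw [this]

lemma dbm_one {N : ℕ} (α m : Fin N → ℕ) : dbm α m (fun _ => 1) = 1 := by
  unfold dbm
  rw [show (fun r => Matrix.blockDiagonal fun _ : Fin (m r) => (1 : Matrix (Fin (α r)) (Fin (α r)) ℂ))
      = fun r => (1 : Matrix (Fin (α r) × Fin (m r)) (Fin (α r) × Fin (m r)) ℂ) from
    funext fun r => Matrix.blockDiagonal_one]
  exact Matrix.blockDiagonal'_one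

lemma dbm_smul {N : ℕ} (α m : Fin N → ℕ) (c : ℂ) (M : ∀ r : Fin N, Matrix (Fin (α r)) (Fin (α r)) ℂ) :
    dbm α m (fun r => c • M r) = c • dbm α m M := by
  unfold dbm
  rw [← Matrix.blockDiagonal'_smul]
  have : (c • fun r : Fin N => Matrix.blockDiagonal fun _ : Fin (m r) => M r)
      = fun r : Fin N => Matrix.blockDiagonal fun _ : Fin (m r) => c • M r := by
    funext r
    exact (Matrix.blockDiagonal_smul c _).symm
  rw [this]

lemma dbm_transpose {N : ℕ} (α m : Fin N → ℕ) (M : ∀ r : Fin N, Matrix (Fin (α r)) (Fin (α r)) ℂ) :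
    (dbm α m M)ᵀ = dbm α m fun r => (M r)ᵀ := by
  unfold dbm
  rw [Matrix.blockDiagonal'_transpose]
  have : (fun k : Fin N => (Matrix.blockDiagonal fun _ : Fin (m k) => M k)ᵀ)
      = fun r : Fin N => Matrix.blockDiagonal fun _ : Fin (m r) => (M r)ᵀ :=
    funext fun r => Matrix.blockDiagonal_transpose _
  rw [this]

def Nbig {N : ℕ} (α m : Fin N → ℕ) :
    Matrix (Σ r : Fin N, Fin (α r) × Fin (m r)) (Σ r : Fin N, Fin (α r) × Fin (m r)) ℂ :=
  Matrix.of fun v w =>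
    if v.1 = w.1 ∧ (v.2.1 : ℕ) + 1 = (w.2.1 : ℕ) ∧ (v.2.2 : ℕ) = (w.2.2 : ℕ) then 1 else 0

lemma Jb_eq {N : ℕ} (α m : Fin N → ℕ) (lam : ℂ) :
    dbm α m (fun r => Jmat (α r) lam) = lam • 1 + Nbig α m := by
  ext u w
  obtain ⟨r, i, a⟩ := u
  obtain ⟨s, j, b⟩ := w
  by_cases hrs : r = s
  · subst hrs
    simp only [dbm, Matrix.blockDiagonal'_apply_eq, Matrix.blockDiagonal_apply, Matrix.add_apply,
      Matrix.smul_apply, Matrix.one_apply, Nbig, Matrix.of_apply, Jmat, smul_eq_mul,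
      Sigma.mk.inj_iff, heq_eq_eq, Prod.mk.injEq, true_and, Fin.ext_iff]
    split_ifs <;> first | rfl | ring1 | (exfalso; omega)
  · simp only [dbm, Matrix.add_apply, Matrix.smul_apply, smul_eq_mul, Nbig, Matrix.of_apply]
    rw [Matrix.blockDiagonal'_apply_ne _ _ _ hrs, Matrix.one_apply_ne (by simp [hrs]),
      if_neg (by rintro ⟨h, -⟩; exact hrs h)]
    ring

lemma mul_Nbig_apply {N : ℕ} (α m : Fin N → ℕ)
    (X : Matrix (Σ r : Fin N, Fin (α r) × Fin (m r)) (Σ r : Fin N, Fin (α r) × Fin (m r)) ℂ)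
    (u w : Σ r : Fin N, Fin (α r) × Fin (m r)) :
    (X * Nbig α m) u w =
      if 1 ≤ (w.2.1 : ℕ) then
        X u ⟨w.1, (⟨(w.2.1 : ℕ) - 1, by have := w.2.1.isLt; omega⟩, w.2.2)⟩ else 0 := by
  obtain ⟨s, j, b⟩ := w
  rw [Matrix.mul_apply]
  by_cases h : 1 ≤ (j : ℕ)
  · rw [if_pos h, Finset.sum_eq_single
      (⟨s, (⟨(j : ℕ) - 1, by have := j.isLt; omega⟩, b)⟩ : Σ r : Fin N, Fin (α r) × Fin (m r))]
    · simp only [Nbig, Matrix.of_apply]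
      split_ifs with hc
      · rw [mul_one]
      · exact absurd ⟨by trivial, show (j : ℕ) - 1 + 1 = (j : ℕ) from by omega, by trivial⟩ hc
    · intro v _ hv
      obtain ⟨t, k, c⟩ := v
      simp only [Nbig, Matrix.of_apply]
      split_ifs with hc
      · obtain ⟨h1, h2, h3⟩ := hc
        have h1' : t = s := h1
        subst h1'
        have h2' : (k : ℕ) + 1 = (j : ℕ) := h2
        have h3' : (c : ℕ) = (b : ℕ) := h3
        exact absurd (by
          have hk : k = ⟨(j : ℕ) - 1, by have := j.isLt; omega⟩ := Fin.ext (show (k : ℕ) = (j : ℕ) - 1 from by omega)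
          have hc' : c = b := Fin.ext h3'
          rw [hk, hc']) hv
      · rw [mul_zero]
    · intro h'; exact absurd (Finset.mem_univ _) h'
  · rw [if_neg h]
    apply Finset.sum_eq_zero
    intro v _
    obtain ⟨t, k, c⟩ := v
    simp only [Nbig, Matrix.of_apply]
    split_ifs with hc
    · obtain ⟨h1, h2, h3⟩ := hc
      have h2' : (k : ℕ) + 1 = (j : ℕ) := h2
      omega
    · rw [mul_zero]

lemma Nbig_mul_apply {N : ℕ} (α m : Fin N → ℕ)
    (X : Matrix (Σ r : Fin N, Fin (α r) × Fin (m r)) (Σ r : Fin N, Fin (α r) × Fin (m r)) ℂ)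
    (u w : Σ r : Fin N, Fin (α r) × Fin (m r)) :
    (Nbig α m * X) u w =
      if h : (u.2.1 : ℕ) + 1 < α u.1 then
        X ⟨u.1, (⟨(u.2.1 : ℕ) + 1, h⟩, u.2.2)⟩ w else 0 := by
  obtain ⟨r, i, a⟩ := u
  rw [Matrix.mul_apply]
  by_cases h : (i : ℕ) + 1 < α r
  · rw [dif_pos h, Finset.sum_eq_single
      (⟨r, (⟨(i : ℕ) + 1, h⟩, a)⟩ : Σ r : Fin N, Fin (α r) × Fin (m r))]
    · simp only [Nbig, Matrix.of_apply]
      split_ifs with hc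
      · rw [one_mul]
      · exact absurd ⟨by trivial, by trivial, by trivial⟩ hc
    · intro v _ hv
      obtain ⟨t, k, c⟩ := v
      simp only [Nbig, Matrix.of_apply]
      split_ifs with hc
      · obtain ⟨h1, h2, h3⟩ := hc
        have h1' : r = t := h1
        subst h1'
        have h2' : (i : ℕ) + 1 = (k : ℕ) := h2
        have h3' : (a : ℕ) = (c : ℕ) := h3
        exact absurd (by
          have hk : k = ⟨(i : ℕ) + 1, h⟩ := Fin.ext (show (k : ℕ) = (i : ℕ) + 1 from by omega)
          have hc' : c = a := Fin.ext h3'.symm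
          rw [hk, hc']) hv
      · rw [zero_mul]
    · intro h'; exact absurd (Finset.mem_univ _) h'
  · rw [dif_neg h]
    apply Finset.sum_eq_zero
    intro v _
    obtain ⟨t, k, c⟩ := v
    simp only [Nbig, Matrix.of_apply]
    split_ifs with hc
    · obtain ⟨h1, h2, h3⟩ := hc
      have h1' : r = t := h1
      subst h1'
      have h2' : (i : ℕ) + 1 = (k : ℕ) := h2
      have := k.isLt
      omega
    · rw [zero_mul]

def xent {N : ℕ} (α m : Fin N → ℕ)
    (X : Matrix (Σ r : Fin N, Fin (α r) × Fin (m r)) (Σ r : Fin N, Fin (α r) × Fin (m r)) ℂ)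
    (r s : Fin N) (a : Fin (m r)) (b : Fin (m s)) (i j : ℕ) : ℂ :=
  if h : i < α r ∧ j < α s then X ⟨r, (⟨i, h.1⟩, a)⟩ ⟨s, (⟨j, h.2⟩, b)⟩ else 0

lemma xent_eq {N : ℕ} (α m : Fin N → ℕ) (X) (r s : Fin N) (a : Fin (m r)) (b : Fin (m s))
    (i : Fin (α r)) (j : Fin (α s)) :
    X ⟨r, (i, a)⟩ ⟨s, (j, b)⟩ = xent α m X r s a b (i : ℕ) (j : ℕ) := by
  rw [xent, dif_pos (show (i : ℕ) < α r ∧ (j : ℕ) < α s from ⟨i.isLt, j.isLt⟩)]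

lemma comm_iff_form {N : ℕ} (α m : Fin N → ℕ) (hα1 : ∀ r, 0 < α r)
    (X : Matrix (Σ r : Fin N, Fin (α r) × Fin (m r)) (Σ r : Fin N, Fin (α r) × Fin (m r)) ℂ) :
    X * Nbig α m = Nbig α m * X ↔ IsForm0T0 α m X := by
  constructor
  · intro hcomm
    have Cx : ∀ (r s : Fin N) (a : Fin (m r)) (b : Fin (m s)) (i j : ℕ), j < α s →
        (if 1 ≤ j then xent α m X r s a b i (j - 1) else 0) = xent α m X r s a b (i + 1) j := by
      intro r s a b i j hj
      by_cases hi : i < α r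
      · have h := congrFun (congrFun hcomm ⟨r, (⟨i, hi⟩, a)⟩) ⟨s, (⟨j, hj⟩, b)⟩
        rw [mul_Nbig_apply, Nbig_mul_apply] at h
        dsimp only at h
        by_cases h1 : 1 ≤ j
        · rw [if_pos h1] at h ⊢
          rw [xent, dif_pos (show i < α r ∧ j - 1 < α s from ⟨hi, by omega⟩)]
          by_cases h2 : i + 1 < α r
          · rw [dif_pos h2] at h
            rw [xent, dif_pos (show i + 1 < α r ∧ j < α s from ⟨h2, hj⟩)]
            exact h
          · rw [dif_neg h2] at h
            rw [xent, dif_neg (by omega)]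
            exact h
        · rw [if_neg h1] at h ⊢
          by_cases h2 : i + 1 < α r
          · rw [dif_pos h2] at h
            rw [xent, dif_pos (show i + 1 < α r ∧ j < α s from ⟨h2, hj⟩)]
            exact h
          · rw [xent, dif_neg (by omega)]
      · simp only [xent]
        split_ifs <;> first | rfl | (exfalso; omega)
    have step : ∀ (r s : Fin N) (a : Fin (m r)) (b : Fin (m s)) (i j : ℕ), j + 1 < α s →
        xent α m X r s a b i j = xent α m X r s a b (i + 1) (j + 1) := by
      intro r s a b i j hj
      have h := Cx r s a b i (j + 1) hj
      rw [if_pos (by omega)] at h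
      simpa using h
    have col0 : ∀ (r s : Fin N) (a : Fin (m r)) (b : Fin (m s)) (i : ℕ),
        xent α m X r s a b (i + 1) 0 = 0 := by
      intro r s a b i
      have h := Cx r s a b i 0 (hα1 s)
      rw [if_neg (by omega)] at h
      exact h.symm
    have diag : ∀ (r s : Fin N) (a : Fin (m r)) (b : Fin (m s)) (t i j : ℕ), j + t < α s →
        xent α m X r s a b i j = xent α m X r s a b (i + t) (j + t) := by
      intro r s a b t
      induction t with
      | zero => intro i j _; rfl
      | succ t ih =>
        intro i j h
        rw [ih i j (by omega), step r s a b (i + t) (j + t) (by omega)]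
        rfl
    have zeroLem : ∀ (r s : Fin N) (a : Fin (m r)) (b : Fin (m s)) (i j : ℕ), j < α s →
        j + min (α r) (α s) < i + α s → xent α m X r s a b i j = 0 := by
      intro r s a b i j hj hlt
      rcases Nat.lt_or_ge j i with hji | hij
      · have h0 : xent α m X r s a b (i - j) 0 = 0 := by
          have he : i - j = (i - j - 1) + 1 := by omega
          rw [he]
          exact col0 r s a b _
        have hd := diag r s a b j (i - j) 0 (by omega)
        rw [h0] at hd
        have e1 : i - j + j = i := by omega
        have e2 : (0 : ℕ) + j = j := by omega
        rw [e1, e2] at hd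
        exact hd.symm
      · by_cases hip : i < α r
        · have hd := diag r s a b (α r - i) i j (by omega)
          have e1 : i + (α r - i) = α r := by omega
          rw [e1] at hd
          rw [hd, xent, dif_neg (by omega)]
        · rw [xent, dif_neg (by omega)]
    refine ⟨fun r s d => Matrix.of fun a b =>
      xent α m X r s a b 0 ((α s - min (α r) (α s)) + d), ?_⟩
    intro r s i j a b
    rw [xent_eq α m X r s a b i j]
    by_cases hij : (i : ℕ) + (α s - min (α r) (α s)) ≤ (j : ℕ)
    · rw [if_pos hij]
      simp only [Matrix.of_apply]
      have harg : (α s - min (α r) (α s)) + ((j : ℕ) - (i : ℕ) - (α s - min (α r) (α s)))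
          = (j : ℕ) - (i : ℕ) := by omega
      rw [harg]
      have hd := diag r s a b (i : ℕ) 0 ((j : ℕ) - (i : ℕ)) (by have := j.isLt; omega)
      have e1 : (0 : ℕ) + (i : ℕ) = (i : ℕ) := by omega
      have e2 : (j : ℕ) - (i : ℕ) + (i : ℕ) = (j : ℕ) := by omega
      rw [e1, e2] at hd
      exact hd.symm
    · rw [if_neg hij]
      exact zeroLem r s a b (i : ℕ) (j : ℕ) j.isLt (by omega)
  · rintro ⟨A, hA⟩
    ext u w
    obtain ⟨r, i, a⟩ := u
    obtain ⟨s, j, b⟩ := w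
    rw [mul_Nbig_apply, Nbig_mul_apply]
    dsimp only
    have hip := i.isLt
    have hjq := j.isLt
    by_cases h1 : 1 ≤ (j : ℕ)
    · rw [if_pos h1]
      by_cases h2 : (i : ℕ) + 1 < α r
      · rw [dif_pos h2, hA, hA]
        dsimp only
        by_cases h3 : (i : ℕ) + (α s - min (α r) (α s)) ≤ (j : ℕ) - 1
        · rw [if_pos h3, if_pos (by omega)]
          have harg : (j : ℕ) - 1 - (i : ℕ) - (α s - min (α r) (α s))
              = (j : ℕ) - ((i : ℕ) + 1) - (α s - min (α r) (α s)) := by omega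
          rw [harg]
        · rw [if_neg h3, if_neg (by omega)]
      · rw [dif_neg h2, hA]
        dsimp only
        rw [if_neg (by omega)]
    · rw [if_neg h1]
      by_cases h2 : (i : ℕ) + 1 < α r
      · rw [dif_pos h2, hA]
        dsimp only
        rw [if_neg (by omega)]
      · rw [dif_neg h2]

lemma bigF_eq {N : ℕ} (α m : Fin N → ℕ) : bigF α m = dbm α m fun r => ErevC (α r) := by
  unfold bigF dbm
  refine congrArg Matrix.blockDiagonal' (funext fun r => ?_)
  ext ⟨i, a⟩ ⟨j, b⟩
  simp only [revE, Matrix.of_apply, Matrix.blockDiagonal_apply, ErevC]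
  split_ifs <;> simp_all

lemma bigF_transpose {N : ℕ} (α m : Fin N → ℕ) : (bigF α m)ᵀ = bigF α m := by
  rw [bigF_eq, dbm_transpose,
    show (fun r => (ErevC (α r))ᵀ) = fun r => ErevC (α r) from
      funext fun r => ErevC_transpose _]

lemma bigF_mul_bigF {N : ℕ} (α m : Fin N → ℕ) : bigF α m * bigF α m = 1 := by
  rw [bigF_eq, dbm_mul,
    show (fun r => ErevC (α r) * ErevC (α r)) = fun _ => 1 from
      funext fun r => ErevC_mul_ErevC _]
  exact dbm_one α m

lemma Pb_mul_Pib {N : ℕ} (α m : Fin N → ℕ) :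
    dbm α m (fun r => Pmat (α r)) * dbm α m (fun r => PmatInv (α r)) = 1 := by
  rw [dbm_mul,
    show (fun r => Pmat (α r) * PmatInv (α r)) = fun _ => 1 from
      funext fun r => Pmat_mul_PmatInv _]
  exact dbm_one α m

lemma Pib_mul_Pb {N : ℕ} (α m : Fin N → ℕ) :
    dbm α m (fun r => PmatInv (α r)) * dbm α m (fun r => Pmat (α r)) = 1 := by
  rw [dbm_mul,
    show (fun r => PmatInv (α r) * Pmat (α r)) = fun _ => 1 from
      funext fun r => PmatInv_mul_Pmat _]
  exact dbm_one α m

lemma Pb_sq {N : ℕ} (α m : Fin N → ℕ) :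
    dbm α m (fun r => Pmat (α r)) * dbm α m (fun r => Pmat (α r)) = Complex.I • bigF α m := by
  rw [dbm_mul,
    show (fun r => Pmat (α r) * Pmat (α r)) = fun r => Complex.I • ErevC (α r) from
      funext fun r => Pmat_sq _,
    dbm_smul, ← bigF_eq]

lemma Pib_sq {N : ℕ} (α m : Fin N → ℕ) :
    dbm α m (fun r => PmatInv (α r)) * dbm α m (fun r => PmatInv (α r))
      = (-Complex.I) • bigF α m := by
  rw [dbm_mul,
    show (fun r => PmatInv (α r) * PmatInv (α r)) = fun r => (-Complex.I) • ErevC (α r) from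
      funext fun r => PmatInv_sq _,
    dbm_smul, ← bigF_eq]

lemma Fb_comm_Pib {N : ℕ} (α m : Fin N → ℕ) :
    bigF α m * dbm α m (fun r => PmatInv (α r)) = dbm α m (fun r => PmatInv (α r)) * bigF α m := by
  rw [bigF_eq, dbm_mul, dbm_mul,
    show (fun r => ErevC (α r) * PmatInv (α r)) = fun r => PmatInv (α r) * ErevC (α r) from
      funext fun r => ErevC_comm_PmatInv _]

lemma Pb_transpose {N : ℕ} (α m : Fin N → ℕ) :
    (dbm α m (fun r => Pmat (α r)))ᵀ = dbm α m (fun r => Pmat (α r)) := by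
  rw [dbm_transpose,
    show (fun r => (Pmat (α r))ᵀ) = fun r => Pmat (α r) from funext fun r => Pmat_transpose _]

lemma Pib_transpose {N : ℕ} (α m : Fin N → ℕ) :
    (dbm α m (fun r => PmatInv (α r)))ᵀ = dbm α m (fun r => PmatInv (α r)) := by
  rw [dbm_transpose,
    show (fun r => (PmatInv (α r))ᵀ) = fun r => PmatInv (α r) from
      funext fun r => PmatInv_transpose _]

lemma sandwich_iff {n : Type*} [Fintype n] [DecidableEq n] (F X : Matrix n n ℂ)
    (hFF : F * F = 1) : F * Xᵀ * F * X = 1 ↔ Xᵀ * F * X = F := by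
  constructor <;> intro h
  · have h2 : F * (F * Xᵀ * F * X) = F * 1 := by rw [h]
    rw [mul_one] at h2
    simp only [← mul_assoc] at h2
    rw [hFF, one_mul] at h2
    exact h2
  · have h2 : F * (Xᵀ * F * X) = F * F := by rw [h]
    simp only [← mul_assoc] at h2
    rw [hFF] at h2
    exact h2

lemma form_iff_commJ {N : ℕ} (α m : Fin N → ℕ) (hα1 : ∀ r, 0 < α r) (lam : ℂ)
    (X : Matrix (Σ r : Fin N, Fin (α r) × Fin (m r)) (Σ r : Fin N, Fin (α r) × Fin (m r)) ℂ) :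
    IsForm0T0 α m X ↔
      X * dbm α m (fun r => Jmat (α r) lam) = dbm α m (fun r => Jmat (α r) lam) * X := by
  rw [Jb_eq, mul_add, add_mul, Matrix.mul_smul, Matrix.smul_mul, mul_one, one_mul, add_right_inj]
  exact (comm_iff_form α m hα1 X).symm


/-- For `S = ⊕_{r=1}^N ⊕_{j=1}^{m_r} K_{α_r}(λ)`, the set
`𝕏 = {X ∈ GL_n(ℂ) : X has form (0T0) and F Xᵀ F X = 1}` (with `F = ⊕_r E_{α_r}(I_{m_r})`)
is a group under matrix multiplication, and the isotropy group
`Σ_S = {Q ∈ O_n(ℂ) : QᵀSQ = S}` is isomorphic, as a group, to `𝕏`. -/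
theorem stmt2 (N : ℕ) (hN : 0 < N) (α m : Fin N → ℕ)
    (hαa : StrictAnti α) (hα1 : ∀ r, 0 < α r) (hm : ∀ r, 0 < m r) (lam : ℂ) :
    (1 : Matrix (Σ r : Fin N, Fin (α r) × Fin (m r)) (Σ r : Fin N, Fin (α r) × Fin (m r)) ℂ) ∈
        {X | IsUnit X ∧ IsForm0T0 α m X ∧ bigF α m * Xᵀ * bigF α m * X = 1} ∧
    (∀ X Y, X ∈ {X | IsUnit X ∧ IsForm0T0 α m X ∧ bigF α m * Xᵀ * bigF α m * X = 1} →
        Y ∈ {X | IsUnit X ∧ IsForm0T0 α m X ∧ bigF α m * Xᵀ * bigF α m * X = 1} →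
        X * Y ∈ {X | IsUnit X ∧ IsForm0T0 α m X ∧ bigF α m * Xᵀ * bigF α m * X = 1}) ∧
    (∀ X, X ∈ {X | IsUnit X ∧ IsForm0T0 α m X ∧ bigF α m * Xᵀ * bigF α m * X = 1} →
        X⁻¹ ∈ {X | IsUnit X ∧ IsForm0T0 α m X ∧ bigF α m * Xᵀ * bigF α m * X = 1}) ∧
    ∃ f : Matrix (Σ r : Fin N, Fin (α r) × Fin (m r)) (Σ r : Fin N, Fin (α r) × Fin (m r)) ℂ →
        Matrix (Σ r : Fin N, Fin (α r) × Fin (m r)) (Σ r : Fin N, Fin (α r) × Fin (m r)) ℂ,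
      Set.BijOn f
        (sigmaSet (Matrix.blockDiagonal' fun r =>
          Matrix.blockDiagonal fun _ : Fin (m r) => Kmat (α r) lam))
        {X | IsUnit X ∧ IsForm0T0 α m X ∧ bigF α m * Xᵀ * bigF α m * X = 1} ∧
      ∀ Q₁ Q₂,
        Q₁ ∈ sigmaSet (Matrix.blockDiagonal' fun r =>
          Matrix.blockDiagonal fun _ : Fin (m r) => Kmat (α r) lam) →
        Q₂ ∈ sigmaSet (Matrix.blockDiagonal' fun r =>
          Matrix.blockDiagonal fun _ : Fin (m r) => Kmat (α r) lam) →
        f (Q₁ * Q₂) = f Q₁ * f Q₂ := by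
  classical
  set F := bigF α m with hFdef
  set P := dbm α m (fun r => Pmat (α r)) with hPdef
  set Pi := dbm α m (fun r => PmatInv (α r)) with hPidef
  set Jb := dbm α m (fun r => Jmat (α r) lam) with hJdef
  have hFF : F * F = 1 := bigF_mul_bigF α m
  have hFt : Fᵀ = F := bigF_transpose α m
  have hPPi : P * Pi = 1 := Pb_mul_Pib α m
  have hPiP : Pi * P = 1 := Pib_mul_Pb α m
  have hP2 : P * P = Complex.I • F := Pb_sq α m
  have hPi2 : Pi * Pi = (-Complex.I) • F := Pib_sq α m
  have hFPi : F * Pi = Pi * F := Fb_comm_Pib α m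
  have hPt : Pᵀ = P := Pb_transpose α m
  have hPit : Piᵀ = Pi := Pib_transpose α m
  have hPPiZ : ∀ Z, P * (Pi * Z) = Z := fun Z => by rw [← mul_assoc, hPPi, one_mul]
  have hPiPZ : ∀ Z, Pi * (P * Z) = Z := fun Z => by rw [← mul_assoc, hPiP, one_mul]
  have hFFZ : ∀ Z, F * (F * Z) = Z := fun Z => by rw [← mul_assoc, hFF, one_mul]
  have hS : (Matrix.blockDiagonal' fun r =>
      Matrix.blockDiagonal fun _ : Fin (m r) => Kmat (α r) lam) = P * Jb * Pi := by
    rw [hPdef, hJdef, hPidef, dbm_mul, dbm_mul]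
    rfl
  set S := Matrix.blockDiagonal' fun r =>
    Matrix.blockDiagonal fun _ : Fin (m r) => Kmat (α r) lam with hSdef
  have hPiFPi : Pi * F * Pi = (-Complex.I) • 1 := by
    rw [mul_assoc, hFPi, ← mul_assoc, hPi2, Matrix.smul_mul, hFF]
  have hSP : S * P = P * Jb := by
    rw [hS]
    simp only [mul_assoc]
    rw [hPiP, mul_one]
  have hPiS : Pi * S = Jb * Pi := by
    rw [hS]
    simp only [mul_assoc]
    rw [hPiPZ]
  have hchar : ∀ X, (IsUnit X ∧ IsForm0T0 α m X ∧ F * Xᵀ * F * X = 1) ↔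
      (X * Jb = Jb * X ∧ Xᵀ * F * X = F) := by
    intro X
    constructor
    · rintro ⟨h1, h2, h3⟩
      exact ⟨(form_iff_commJ α m hα1 lam X).1 h2, (sandwich_iff F X hFF).1 h3⟩
    · rintro ⟨hc, hs⟩
      have h3 : F * Xᵀ * F * X = 1 := (sandwich_iff F X hFF).2 hs
      exact ⟨IsUnit.of_mul_eq_one_right _ h3,
        (form_iff_commJ α m hα1 lam X).2 hc, h3⟩
  refine ⟨?_, ?_, ?_, ?_⟩
  · exact (hchar 1).2 ⟨by rw [one_mul, mul_one],
      by rw [Matrix.transpose_one, one_mul, mul_one]⟩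
  · intro X Y hX hY
    obtain ⟨hcX, hsX⟩ := (hchar X).1 hX
    obtain ⟨hcY, hsY⟩ := (hchar Y).1 hY
    refine (hchar _).2 ⟨?_, ?_⟩
    · calc X * Y * Jb = X * (Y * Jb) := mul_assoc _ _ _
        _ = X * (Jb * Y) := by rw [hcY]
        _ = X * Jb * Y := (mul_assoc _ _ _).symm
        _ = Jb * X * Y := by rw [hcX]
        _ = Jb * (X * Y) := mul_assoc _ _ _
    · have e1 : (X * Y)ᵀ * F * (X * Y) = Yᵀ * (Xᵀ * F * X) * Y := by
        rw [Matrix.transpose_mul]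
        simp only [mul_assoc]
      rw [e1, hsX, hsY]
  · intro X hX
    obtain ⟨hc, hs⟩ := (hchar X).1 hX
    have h3 : F * Xᵀ * F * X = 1 := (sandwich_iff F X hFF).2 hs
    have hXB : X * (F * Xᵀ * F) = 1 := mul_eq_one_comm.mp h3
    have hXinv : X⁻¹ = F * Xᵀ * F := Matrix.inv_eq_left_inv h3
    have hXiX : X⁻¹ * X = 1 := by rw [hXinv]; exact h3
    have hXXi : X * X⁻¹ = 1 := by rw [hXinv]; exact hXB
    refine (hchar _).2 ⟨?_, ?_⟩
    · calc X⁻¹ * Jb = X⁻¹ * Jb * (X * X⁻¹) := by rw [hXXi, mul_one]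
        _ = X⁻¹ * (Jb * X) * X⁻¹ := by simp only [mul_assoc]
        _ = X⁻¹ * (X * Jb) * X⁻¹ := by rw [hc]
        _ = X⁻¹ * X * Jb * X⁻¹ := by simp only [mul_assoc]
        _ = Jb * X⁻¹ := by rw [hXiX, one_mul]
    · have hXFXt : X * F * Xᵀ = F := by
        have h4 : X * (F * Xᵀ * F) * F = 1 * F := by rw [hXB]
        simp only [mul_assoc] at h4
        rw [hFF, mul_one, one_mul] at h4
        rw [← mul_assoc] at h4
        exact h4
      rw [hXinv]
      have ht : (F * Xᵀ * F)ᵀ = F * (X * F) := by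
        simp only [Matrix.transpose_mul, Matrix.transpose_transpose, hFt]
      rw [ht]
      calc F * (X * F) * F * (F * Xᵀ * F)
          = F * (X * (F * (F * (F * (Xᵀ * F))))) := by simp only [mul_assoc]
        _ = F * (X * (F * (Xᵀ * F))) := by rw [hFFZ]
        _ = F * ((X * F * Xᵀ) * F) := by simp only [mul_assoc]
        _ = F * (F * F) := by rw [hXFXt]
        _ = F := by rw [hFF, mul_one]
  · refine ⟨fun Q => Pi * Q * P, ⟨?_, ?_, ?_⟩, ?_⟩
    · -- MapsTo
      intro Q hQ
      obtain ⟨hQ1, hQ2⟩ := hQ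
      have hQQt : Q * Qᵀ = 1 := mul_eq_one_comm.mp hQ1
      have hSQ : S * Q = Q * S := by
        have h := congrArg (fun M => Q * M) hQ2
        simp only [mul_assoc] at h
        rw [← mul_assoc Q Qᵀ, hQQt, one_mul] at h
        exact h
      refine (hchar _).2 ⟨?_, ?_⟩
      · calc Pi * Q * P * Jb = Pi * (Q * (P * Jb)) := by simp only [mul_assoc]
          _ = Pi * (Q * (S * P)) := by rw [hSP]
          _ = Pi * ((Q * S) * P) := by simp only [mul_assoc]
          _ = Pi * ((S * Q) * P) := by rw [hSQ]
          _ = (Pi * S) * (Q * P) := by simp only [mul_assoc]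
          _ = (Jb * Pi) * (Q * P) := by rw [hPiS]
          _ = Jb * (Pi * Q * P) := by simp only [mul_assoc]
      · have hXt : (Pi * Q * P)ᵀ = P * (Qᵀ * Pi) := by
          simp only [Matrix.transpose_mul, hPt, hPit, mul_assoc]
        rw [hXt]
        calc P * (Qᵀ * Pi) * F * (Pi * Q * P)
            = P * (Qᵀ * ((Pi * F * Pi) * (Q * P))) := by simp only [mul_assoc]
          _ = P * (Qᵀ * (((-Complex.I) • (1 : Matrix _ _ ℂ)) * (Q * P))) := by rw [hPiFPi]
          _ = (-Complex.I) • (P * (Qᵀ * (Q * P))) := by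
              simp only [Matrix.smul_mul, Matrix.mul_smul, one_mul, mul_assoc]
          _ = (-Complex.I) • (P * P) := by rw [← mul_assoc Qᵀ Q, hQ1, one_mul]
          _ = (-Complex.I) • (Complex.I • F) := by rw [hP2]
          _ = F := by rw [smul_smul, neg_mul, Complex.I_mul_I, neg_neg, one_smul]
    · -- InjOn
      intro Q1 h1 Q2 h2 heq
      have e : ∀ M : Matrix (Σ r : Fin N, Fin (α r) × Fin (m r))
          (Σ r : Fin N, Fin (α r) × Fin (m r)) ℂ, P * (Pi * M * P) * Pi = M := fun M => by
        simp only [mul_assoc]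
        rw [hPPi, mul_one, hPPiZ]
      have h5 := congrArg (fun M => P * M * Pi) heq
      dsimp only at h5
      rw [e Q1, e Q2] at h5
      exact h5
    · -- SurjOn
      intro X hX
      obtain ⟨hc, hs⟩ := (hchar X).1 hX
      have hQt : (P * X * Pi)ᵀ = Pi * (Xᵀ * P) := by
        simp only [Matrix.transpose_mul, hPt, hPit, mul_assoc]
      have hsZ : ∀ Z, Xᵀ * (F * (X * Z)) = F * Z := fun Z => by
        rw [← mul_assoc, ← mul_assoc, hs]
      have hO : (P * X * Pi)ᵀ * (P * X * Pi) = 1 := by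
        rw [hQt]
        calc Pi * (Xᵀ * P) * (P * X * Pi)
            = Pi * (Xᵀ * (P * (P * (X * Pi)))) := by simp only [mul_assoc]
          _ = Pi * (Xᵀ * ((P * P) * (X * Pi))) := by rw [← mul_assoc P P]
          _ = Pi * (Xᵀ * ((Complex.I • F) * (X * Pi))) := by rw [hP2]
          _ = Complex.I • (Pi * (Xᵀ * (F * (X * Pi)))) := by
              simp only [Matrix.smul_mul, Matrix.mul_smul, mul_assoc]
          _ = Complex.I • (Pi * (F * Pi)) := by rw [hsZ]
          _ = Complex.I • ((Pi * F) * Pi) := by rw [mul_assoc]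
          _ = Complex.I • ((-Complex.I) • (1 : Matrix _ _ ℂ)) := by rw [hPiFPi]
          _ = 1 := by rw [smul_smul, mul_neg, Complex.I_mul_I, neg_neg, one_smul]
      have hSQ' : S * (P * X * Pi) = (P * X * Pi) * S := by
        calc S * (P * X * Pi) = (S * P) * (X * Pi) := by simp only [mul_assoc]
          _ = (P * Jb) * (X * Pi) := by rw [hSP]
          _ = P * ((Jb * X) * Pi) := by simp only [mul_assoc]
          _ = P * ((X * Jb) * Pi) := by rw [hc]
          _ = (P * X) * (Jb * Pi) := by simp only [mul_assoc]
          _ = (P * X) * (Pi * S) := by rw [hPiS]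
          _ = (P * X * Pi) * S := by simp only [mul_assoc]
      have hT : (P * X * Pi)ᵀ * S * (P * X * Pi) = S := by
        calc (P * X * Pi)ᵀ * S * (P * X * Pi)
            = (P * X * Pi)ᵀ * (S * (P * X * Pi)) := by rw [mul_assoc]
          _ = (P * X * Pi)ᵀ * ((P * X * Pi) * S) := by rw [hSQ']
          _ = ((P * X * Pi)ᵀ * (P * X * Pi)) * S := by rw [← mul_assoc]
          _ = S := by rw [hO, one_mul]
      refine ⟨P * X * Pi, ⟨hO, hT⟩, ?_⟩
      calc Pi * (P * X * Pi) * P = Pi * (P * (X * (Pi * P))) := by simp only [mul_assoc]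
        _ = X * (Pi * P) := by rw [hPiPZ]
        _ = X := by rw [hPiP, mul_one]
    · -- multiplicative
      intro Q1 Q2 _ _
      calc Pi * (Q1 * Q2) * P = Pi * (Q1 * (Q2 * P)) := by simp only [mul_assoc]
        _ = Pi * (Q1 * (P * (Pi * (Q2 * P)))) := by rw [hPPiZ]
        _ = (Pi * Q1 * P) * (Pi * Q2 * P) := by simp only [mul_assoc]
end
end

section
/- Let λ ∈ ℂ, m, n ≥ 1, and X ∈ ℂ^{m×n}. Then J_m(λ)·X = X·J_n(λ) if and only if X is a rectangular upper-triangular Toeplitz matrix aligned to the top-right corner, i.e., writing b := min(m,n): X_{i,j} = 0 whenever j − i < n − b, and X_{i,j} = X_{i+1,j+1} for all 1 ≤ i ≤ m−1, 1 ≤ j ≤ n−1. Equivalently, X = [0 T] if m < n, X = [T; 0] if m > n, and X = T if m = n, where T is a b×b upper-triangular Toeplitz matrix. -/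
/-!
Write `J_k(λ) = λ + N_k` with `N_k = J_k(0)` the nilpotent shift. The `λ`-terms cancel, so
`J_m(λ) X = X J_n(λ)` says `N_m X = X N_n`, i.e. `X_{i+1,j} = X_{i,j-1}` with entries outside the
matrix read as `0`. In the interior this is the Toeplitz condition; on the border it says that the
first column vanishes below the top and the last row vanishes left of the corner. Sliding along
diagonals, a Toeplitz matrix satisfies these border conditions exactly when it vanishes on the
whole region `j - i < n - min(m,n)`.
-/

open Matrix

theorem Jmat_eq_smul_one_add (n : ℕ) (lam : ℂ) :
    Jmat n lam = lam • (1 : Matrix (Fin n) (Fin n) ℂ) + Jmat n 0 := by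
  ext i j
  by_cases h : i = j
  · subst h; simp [Jmat]
  · simp [Jmat, one_apply_ne h, Fin.val_eq_val, Ne.symm h]

theorem Jmat_zero_apply (n : ℕ) (i j : Fin n) :
    Jmat n 0 i j = if (j : ℕ) = i + 1 then 1 else 0 := by
  simp only [Jmat, of_apply]
  split_ifs <;> first | rfl | omega

theorem Jmat_mul_comm_iff {m n : ℕ} (lam : ℂ) (X : Matrix (Fin m) (Fin n) ℂ) :
    Jmat m lam * X = X * Jmat n lam ↔ Jmat m 0 * X = X * Jmat n 0 := by
  rw [Jmat_eq_smul_one_add m lam, Jmat_eq_smul_one_add n lam, Matrix.add_mul, Matrix.mul_add,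
    Matrix.smul_mul, Matrix.mul_smul, Matrix.one_mul, Matrix.mul_one, add_right_inj]

theorem Jmat_zero_mul_apply {m n : ℕ} (X : Matrix (Fin m) (Fin n) ℂ) (i : Fin m) (j : Fin n) :
    (Jmat m 0 * X) i j = if h : (i : ℕ) + 1 < m then X ⟨i + 1, h⟩ j else 0 := by
  simp only [mul_apply, Jmat_zero_apply, ite_mul, zero_mul, one_mul]
  split_ifs with h
  · have : ∀ k : Fin m, (k : ℕ) = i + 1 ↔ k = ⟨i + 1, h⟩ := fun k => by
      rw [Fin.ext_iff]
    simp only [this, Finset.sum_ite_eq', Finset.mem_univ, if_true]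
  · exact Finset.sum_eq_zero fun k _ => if_neg (by omega)

theorem mul_Jmat_zero_apply {m n : ℕ} (X : Matrix (Fin m) (Fin n) ℂ) (i : Fin m) (j : Fin n) :
    (X * Jmat n 0) i j = if h : 0 < (j : ℕ) then X i ⟨j - 1, by omega⟩ else 0 := by
  simp only [mul_apply, Jmat_zero_apply, mul_ite, mul_zero, mul_one]
  split_ifs with h
  · have : ∀ k : Fin n, (j : ℕ) = k + 1 ↔ k = ⟨j - 1, by omega⟩ := fun k => by
      simp only [Fin.ext_iff]; omega
    simp only [this, Finset.sum_ite_eq', Finset.mem_univ, if_true]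
  · exact Finset.sum_eq_zero fun k _ => if_neg (by omega)

section Toeplitz

variable {α : Type*} {m n : ℕ}

def IsToeplitz (X : Matrix (Fin m) (Fin n) α) : Prop :=
  ∀ (i : Fin m) (j : Fin n) (hi : (i : ℕ) + 1 < m) (hj : (j : ℕ) + 1 < n),
    X i j = X ⟨i + 1, hi⟩ ⟨j + 1, hj⟩

theorem IsToeplitz.apply_eq_of_add {X : Matrix (Fin m) (Fin n) α} (hX : IsToeplitz X)
    {i i' : Fin m} {j j' : Fin n} (t : ℕ) (hi : (i' : ℕ) = i + t) (hj : (j' : ℕ) = j + t) :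
    X i j = X i' j' := by
  induction t generalizing i' j' with
  | zero => rw [Fin.ext hi, Fin.ext hj]
  | succ t ih =>
    rw [ih (i' := ⟨i + t, by omega⟩) (j' := ⟨j + t, by omega⟩) rfl rfl,
      hX _ _ (by simp only; omega) (by simp only; omega)]
    congr 1 <;> ext <;> simp only <;> omega

theorem IsToeplitz.forall_eq_zero_iff [Zero α] {X : Matrix (Fin m) (Fin n) α}
    (hX : IsToeplitz X) :
    (∀ (i : Fin m) (j : Fin n), (j : ℕ) + min m n < i + n → X i j = 0) ↔
      (∀ (i : Fin m) (j : Fin n), (j : ℕ) = 0 → 0 < (i : ℕ) → X i j = 0) ∧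
        ∀ (i : Fin m) (j : Fin n), (i : ℕ) + 1 = m → (j : ℕ) + 1 < n → X i j = 0 := by
  refine ⟨fun h => ⟨fun i j hj hi => h i j (by omega), fun i j hi hj => h i j (by omega)⟩, ?_⟩
  rintro ⟨hcol, hrow⟩ i j hij
  rcases le_or_gt m n with hmn | hnm
  · rw [hX.apply_eq_of_add (i' := ⟨m - 1, by omega⟩) (j' := ⟨j + (m - 1 - i), by omega⟩)
      (m - 1 - i) (by simp only; omega) rfl]
    exact hrow _ _ (by simp only; omega) (by simp only; omega)
  · rw [← hX.apply_eq_of_add (i := ⟨i - j, by omega⟩) (j := ⟨0, by omega⟩) j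
      (by simp only; omega) (by simp only; omega)]
    exact hcol _ _ rfl (by simp only; omega)

end Toeplitz

theorem Jmat_zero_mul_eq_mul_Jmat_zero_iff {m n : ℕ} (X : Matrix (Fin m) (Fin n) ℂ) :
    Jmat m 0 * X = X * Jmat n 0 ↔
      IsToeplitz X ∧
        (∀ (i : Fin m) (j : Fin n), (j : ℕ) = 0 → 0 < (i : ℕ) → X i j = 0) ∧
          ∀ (i : Fin m) (j : Fin n), (i : ℕ) + 1 = m → (j : ℕ) + 1 < n → X i j = 0 := by
  simp only [← Matrix.ext_iff, Jmat_zero_mul_apply, mul_Jmat_zero_apply]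
  constructor
  · intro h
    refine ⟨fun i j hi hj => ?_, fun i j hj hi => ?_, fun i j hi hj => ?_⟩
    · have := h i ⟨j + 1, hj⟩
      rw [dif_pos hi, dif_pos (Nat.succ_pos _)] at this
      exact this.symm
    · obtain ⟨_ | i, hi'⟩ := i
      · exact absurd hi (lt_irrefl 0)
      · have := h ⟨i, by omega⟩ j
        rwa [dif_pos hi', dif_neg (by omega)] at this
    · have := h i ⟨j + 1, hj⟩
      rw [dif_neg (by omega), dif_pos (Nat.succ_pos _)] at this
      simpa only [Nat.add_sub_cancel] using this.symm
  · rintro ⟨hT, hcol, hrow⟩ i j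
    split_ifs with hi hj hj
    · exact (hT.apply_eq_of_add 1 rfl (by simp only; omega)).symm
    · exact hcol _ _ (by omega) (Nat.succ_pos _)
    · exact (hrow _ _ (by omega) (by simp only; omega)).symm
    · rfl

theorem stmt6_general (lam : ℂ) (m n : ℕ) (X : Matrix (Fin m) (Fin n) ℂ) :
    Jmat m lam * X = X * Jmat n lam ↔
      ((∀ (i : Fin m) (j : Fin n), (j : ℕ) + min m n < (i : ℕ) + n → X i j = 0) ∧
        ∀ (i : Fin m) (j : Fin n) (hi : (i : ℕ) + 1 < m) (hj : (j : ℕ) + 1 < n),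
          X i j = X ⟨(i : ℕ) + 1, hi⟩ ⟨(j : ℕ) + 1, hj⟩) := by
  rw [Jmat_mul_comm_iff, Jmat_zero_mul_eq_mul_Jmat_zero_iff]
  constructor
  · rintro ⟨hT, hborder⟩
    exact ⟨hT.forall_eq_zero_iff.2 hborder, hT⟩
  · rintro ⟨hzero, hT : IsToeplitz X⟩
    exact ⟨hT, hT.forall_eq_zero_iff.1 hzero⟩

/-- `J_m(λ)·X = X·J_n(λ)` iff `X` is a rectangular upper-triangular
Toeplitz matrix aligned to the top-right corner: with `b = min(m,n)`, `X_{ij} = 0`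
whenever `j − i < n − b`, and `X_{i,j} = X_{i+1,j+1}`. -/
theorem stmt6 (lam : ℂ) (m n : ℕ) (hm : 1 ≤ m) (hn : 1 ≤ n)
    (X : Matrix (Fin m) (Fin n) ℂ) :
    Jmat m lam * X = X * Jmat n lam ↔
      ((∀ (i : Fin m) (j : Fin n), (j : ℕ) + min m n < (i : ℕ) + n → X i j = 0) ∧
        ∀ (i : Fin m) (j : Fin n) (hi : (i : ℕ) + 1 < m) (hj : (j : ℕ) + 1 < n),
          X i j = X ⟨(i : ℕ) + 1, hi⟩ ⟨(j : ℕ) + 1, hj⟩) :=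
  stmt6_general lam m n X
end

section
/- Fix integers α_1 > α_2 > ⋯ > α_N ≥ 1 and m_1, …, m_N ≥ 1, and set n := Σ_r α_r m_r. The set 𝕋 of all invertible matrices in ℂ^{n×n} having form (0T0) is a subgroup of GL_n(ℂ): if X and Y have form (0T0), then XY has form (0T0); and if X has form (0T0) and is invertible, then X^{-1} has form (0T0). -/
/-!
Index the Toeplitz coefficients of the `(r, s)` block by `j - i`. Then form (0T0) says that
every block is upper triangular Toeplitz with coefficient sequence vanishing below the order
`(α s - α r)₊`. The coefficients of a product are convolutions of coefficients, and the orders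
satisfy `(α s - α r)₊ ≤ (α t - α r)₊ + (α s - α t)₊`, so these matrices form a subalgebra of
the matrix algebra. A subalgebra of a finite-dimensional matrix algebra contains the inverse of
each of its invertible elements, since left multiplication by such an element is injective,
hence surjective, on it.
-/

open Matrix

noncomputable section

open Finset

theorem Finset.sum_range_ite_eq_sum_antidiagonal {M : Type*} [AddCommMonoid M] {n i j : ℕ}
    (hij : i ≤ j) (f : ℕ → ℕ → M) (hf : ∀ k, n ≤ k → k ≤ j → f (k - i) (j - k) = 0) :
    ∑ k ∈ range n, (if i ≤ k ∧ k ≤ j then f (k - i) (j - k) else 0) =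
      ∑ x ∈ antidiagonal (j - i), f x.1 x.2 := by
  rw [← sum_filter, Nat.sum_antidiagonal_eq_sum_range_succ]
  have hIcc : ∑ k ∈ (range n).filter (fun k => i ≤ k ∧ k ≤ j), f (k - i) (j - k) =
      ∑ k ∈ Ico i (j + 1), f (k - i) (j - k) := by
    refine sum_subset (fun k hk => ?_) (fun k hk hkn => ?_)
    · simp only [mem_filter, mem_range, mem_Ico] at hk ⊢
      omega
    · simp only [mem_filter, mem_range, mem_Ico] at hk hkn
      exact hf k (by omega) (by omega)
  rw [hIcc, sum_Ico_eq_sum_range]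
  refine sum_congr (by congr 1; omega) fun k _ => ?_
  congr 1 <;> omega

theorem Matrix.inv_mem_subalgebra {n K : Type*} [Fintype n] [DecidableEq n] [Field K]
    (S : Subalgebra K (Matrix n n K)) {X : Matrix n n K} (hX : X ∈ S) : X⁻¹ ∈ S := by
  -- `X⁻¹ = 0` for singular `X`; otherwise left multiplication by `X` is injective on `S`,
  -- hence surjective
  by_cases hU : IsUnit X
  · have hinj : Function.Injective (LinearMap.mulLeft K (⟨X, hX⟩ : S)) := fun Y Z h =>
      Subtype.ext (hU.mul_left_cancel (congrArg Subtype.val h))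
    obtain ⟨Y, hY⟩ := LinearMap.injective_iff_surjective.mp hinj 1
    rw [Matrix.inv_eq_right_inv (congrArg Subtype.val hY)]
    exact Y.2
  · rw [Matrix.nonsing_inv_apply_not_isUnit X (mt (Matrix.isUnit_iff_isUnit_det X).2 hU)]
    exact S.zero_mem

section BlockToeplitz

variable {κ R : Type*} (α m : κ → ℕ)

/-- Form (0T0) with the coefficients of the `(r, s)` block indexed by `j - i` instead of
`j - i - (α s - α r)`; the first `α s - α r` of them must then vanish. -/
def IsBlockToeplitz [Semiring R]
    (X : Matrix (Σ r, Fin (α r) × Fin (m r)) (Σ r, Fin (α r) × Fin (m r)) R) : Prop :=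
  ∃ A : ∀ r s, ℕ → Matrix (Fin (m r)) (Fin (m s)) R,
    (∀ r s q, q < α s - α r → A r s q = 0) ∧
    ∀ r s (i : Fin (α r)) (j : Fin (α s)) a b,
      X ⟨r, (i, a)⟩ ⟨s, (j, b)⟩ = if (i : ℕ) ≤ j then A r s (j - i) a b else 0

variable {α m}

theorem isBlockToeplitz_zero [Semiring R] : IsBlockToeplitz α m (0 : Matrix _ _ R) :=
  ⟨fun _ _ _ => 0, fun _ _ _ _ => rfl, fun _ _ _ _ _ _ => by simp⟩

theorem isBlockToeplitz_one [Fintype κ] [DecidableEq κ] [Semiring R] :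
    IsBlockToeplitz α m (1 : Matrix _ _ R) := by
  refine ⟨fun r s q => Matrix.of fun a b =>
    if q = 0 then (1 : Matrix (Σ r, Fin (m r)) (Σ r, Fin (m r)) R) ⟨r, a⟩ ⟨s, b⟩ else 0,
    fun r s q hq => ?_, fun r s i j a b => ?_⟩
  · obtain rfl | hrs := eq_or_ne r s
    · omega
    · ext a b
      simp [hrs]
  · rcases eq_or_ne r s with rfl | hrs
    · simp only [Matrix.one_apply, Matrix.of_apply, Sigma.mk.injEq, heq_eq_eq, Prod.mk.injEq,
        true_and, Fin.ext_iff]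
      split_ifs <;> first | rfl | omega
    · simp [hrs]

theorem IsBlockToeplitz.add [Semiring R]
    {X Y : Matrix (Σ r, Fin (α r) × Fin (m r)) (Σ r, Fin (α r) × Fin (m r)) R}
    (hX : IsBlockToeplitz α m X) (hY : IsBlockToeplitz α m Y) :
    IsBlockToeplitz α m (X + Y) := by
  obtain ⟨A, hA0, hA⟩ := hX
  obtain ⟨B, hB0, hB⟩ := hY
  refine ⟨fun r s q => A r s q + B r s q, fun r s q hq => ?_, fun r s i j a b => ?_⟩
  · simp only [hA0 r s q hq, hB0 r s q hq, add_zero]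
  · rw [Matrix.add_apply, hA, hB]
    split_ifs <;> simp

theorem IsBlockToeplitz.smul [Semiring R] (c : R)
    {X : Matrix (Σ r, Fin (α r) × Fin (m r)) (Σ r, Fin (α r) × Fin (m r)) R}
    (hX : IsBlockToeplitz α m X) : IsBlockToeplitz α m (c • X) := by
  obtain ⟨A, hA0, hA⟩ := hX
  refine ⟨fun r s q => c • A r s q, fun r s q hq => ?_, fun r s i j a b => ?_⟩
  · simp only [hA0 r s q hq, smul_zero]
  · rw [Matrix.smul_apply, hA]
    split_ifs <;> simp

theorem IsBlockToeplitz.mul [Fintype κ] [Semiring R]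
    {X Y : Matrix (Σ r, Fin (α r) × Fin (m r)) (Σ r, Fin (α r) × Fin (m r)) R}
    (hX : IsBlockToeplitz α m X) (hY : IsBlockToeplitz α m Y) :
    IsBlockToeplitz α m (X * Y) := by
  obtain ⟨A, hA0, hA⟩ := hX
  obtain ⟨B, hB0, hB⟩ := hY
  refine ⟨fun r s q => ∑ t, ∑ x ∈ antidiagonal q, A r t x.1 * B t s x.2, ?_, ?_⟩
  · intro r s q hq
    refine sum_eq_zero fun t _ => sum_eq_zero fun x hx => ?_
    rw [HasAntidiagonal.mem_antidiagonal] at hx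
    -- `α s - α r ≤ (α t - α r) + (α s - α t)` in truncated subtraction
    by_cases hx1 : x.1 < α t - α r
    · rw [hA0 r t x.1 hx1, Matrix.zero_mul]
    · rw [hB0 t s x.2 (by omega), Matrix.mul_zero]
  intro r s i j a b
  rw [Matrix.mul_apply, Fintype.sum_sigma]
  simp only [Fintype.sum_prod_type, hA, hB, ite_zero_mul_ite_zero, sum_ite_irrel, sum_const_zero,
    ← Matrix.mul_apply]
  split_ifs with hij
  · rw [Matrix.sum_apply]
    refine sum_congr rfl fun t _ => ?_
    rw [Fin.sum_univ_eq_sum_range (fun k => if (i : ℕ) ≤ k ∧ k ≤ j then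
      (A r t (k - i) * B t s (j - k)) a b else 0), Matrix.sum_apply]
    refine sum_range_ite_eq_sum_antidiagonal hij (fun u v => (A r t u * B t s v) a b) ?_
    -- a summation index `k ≥ α t` would meet a coefficient of `B t s` below `α s - α t`
    intro k hk hkj
    rw [hB0 t s _ (by omega), Matrix.mul_zero, Matrix.zero_apply]
  · exact sum_eq_zero fun t _ => sum_eq_zero fun k _ => if_neg (by omega)

variable (α m R) in
def blockToeplitzSubalgebra [Fintype κ] [DecidableEq κ] [CommSemiring R] :
    Subalgebra R (Matrix (Σ r, Fin (α r) × Fin (m r)) (Σ r, Fin (α r) × Fin (m r)) R) :=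
  Submodule.toSubalgebra
    { carrier := {X | IsBlockToeplitz α m X}
      add_mem' := IsBlockToeplitz.add
      zero_mem' := isBlockToeplitz_zero
      smul_mem' := fun c _ hX => hX.smul c }
    isBlockToeplitz_one (fun _ _ => IsBlockToeplitz.mul)

end BlockToeplitz

theorem isForm0T0_iff_isBlockToeplitz {N : ℕ} {α m : Fin N → ℕ}
    {X : Matrix (Σ r : Fin N, Fin (α r) × Fin (m r)) (Σ r : Fin N, Fin (α r) × Fin (m r)) ℂ} :
    IsForm0T0 α m X ↔ IsBlockToeplitz α m X := by
  have hoffset : ∀ r s, α s - min (α r) (α s) = α s - α r := fun r s => by omega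
  simp only [IsForm0T0, IsBlockToeplitz, hoffset]
  constructor
  · rintro ⟨A, hA⟩
    refine ⟨fun r s q => if α s - α r ≤ q then A r s (q - (α s - α r)) else 0,
      fun r s q hq => if_neg (by omega), fun r s i j a b => ?_⟩
    rw [hA]
    dsimp only
    split_ifs <;> first | rfl | omega
  · rintro ⟨A, hA0, hA⟩
    refine ⟨fun r s p => A r s (p + (α s - α r)), fun r s i j a b => ?_⟩
    rw [hA]
    dsimp only
    split_ifs with hle hij
    · rw [Nat.sub_add_cancel (by omega)]
    · rw [hA0 r s _ (by omega), Matrix.zero_apply]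
    · omega
    · rfl

theorem stmt7_general (N : ℕ) (α m : Fin N → ℕ) :
    IsForm0T0 α m 1 ∧
    (∀ X Y, IsForm0T0 α m X → IsForm0T0 α m Y → IsForm0T0 α m (X * Y)) ∧
    (∀ X, IsForm0T0 α m X → IsUnit X → IsForm0T0 α m X⁻¹) := by
  simp only [isForm0T0_iff_isBlockToeplitz]
  exact ⟨isBlockToeplitz_one, fun X Y hX hY => hX.mul hY,
    fun X hX _ => Matrix.inv_mem_subalgebra (blockToeplitzSubalgebra ℂ α m) hX⟩

/-- The set `𝕋` of invertible matrices of form (0T0) is a subgroup of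
`GL_n(ℂ)`: the identity has form (0T0), products of matrices of form (0T0) have form
(0T0), and the inverse of an invertible matrix of form (0T0) has form (0T0). -/
theorem stmt7 (N : ℕ) (α m : Fin N → ℕ)
    (hαa : StrictAnti α) (hα1 : ∀ r, 0 < α r) (hm : ∀ r, 0 < m r) :
    IsForm0T0 α m 1 ∧
    (∀ X Y, IsForm0T0 α m X → IsForm0T0 α m Y → IsForm0T0 α m (X * Y)) ∧
    (∀ X, IsForm0T0 α m X → IsUnit X → IsForm0T0 α m X⁻¹) :=
  stmt7_general N α m
end
end

section
/- Fix integers α_1 > α_2 > ⋯ > α_N ≥ 1 and m_1, …, m_N ≥ 1, and set n := Σ_r α_r m_r. If M ∈ ℂ^{n×n} has form (0T0) and the leading Toeplitz coefficient of every diagonal block vanishes (A^{rr}_0 = 0 for all r = 1, …, N), then M is nilpotent; in particular M^n = 0. Consequently, every matrix U of form (0T0) whose diagonal blocks have leading Toeplitz coefficient A^{rr}_0 = I_{m_r} for all r is unipotent: (U − I_n)^n = 0. -/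
open Matrix

noncomputable section

/-
Order the indices `(r, i, a)` lexicographically by `(i - α r, α r)`. A nonzero entry of a
(0T0) matrix in position `((r, i, a), (s, j, b))` has `j - i ≥ α s - min (α r) (α s)`, so
`i - α r ≤ j - α s`, with equality only if `α r < α s` or the entry lies in a diagonal
entry-block `r = s`, `i = j`. Hence if the leading diagonal coefficients vanish, the support
of the matrix is strictly increasing for this order, and a matrix whose support is strictly
increasing for a weight into a linear order is nilpotent of index at most its size.
For `U`, apply this to `U - 1`, which is again of form (0T0).
-/

namespace Matrix

variable {ι R : Type*} [Fintype ι] [DecidableEq ι] [Semiring R]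

theorem pow_card_eq_zero_of_apply_ne_zero_lt {β : Type*} [LinearOrder β] (M : Matrix ι ι R)
    (f : ι → β) (hM : ∀ x y, M x y ≠ 0 → f x < f y) : M ^ Fintype.card ι = 0 := by
  let below : ι → ℕ := fun y => (Finset.univ.filter fun z => f z < f y).card
  have below_lt : ∀ z y, f z < f y → below z < below y := fun z y hzy =>
    Finset.card_lt_card <| Finset.ssubset_iff_of_subset
      (fun w hw => by simp only [Finset.mem_filter] at hw ⊢; exact ⟨hw.1, hw.2.trans hzy⟩)
      |>.mpr ⟨z, by simpa using hzy, by simp⟩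
  have below_lt_card : ∀ y, below y < Fintype.card ι := fun y =>
    Finset.card_lt_card <| Finset.filter_ssubset.mpr ⟨y, Finset.mem_univ y, lt_irrefl _⟩
  have le_below : ∀ k x y, (M ^ k) x y ≠ 0 → k ≤ below y := by
    intro k
    induction k with
    | zero => exact fun _ _ _ => Nat.zero_le _
    | succ k ih =>
      intro x y hxy
      rw [pow_succ, mul_apply] at hxy
      obtain ⟨z, -, hz⟩ := Finset.exists_ne_zero_of_sum_ne_zero hxy
      exact (ih x z (left_ne_zero_of_mul hz)).trans_lt
        (below_lt z y (hM z y (right_ne_zero_of_mul hz)))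
  ext x y
  by_contra hxy
  exact (le_below _ x y hxy).not_gt (below_lt_card y)

end Matrix

section Form0T0

variable {N : ℕ} {α m : Fin N → ℕ}

abbrev BlockIndex (α m : Fin N → ℕ) := Σ r : Fin N, Fin (α r) × Fin (m r)

theorem card_blockIndex : Fintype.card (BlockIndex α m) = ∑ r : Fin N, α r * m r := by
  simp [Fintype.card_sigma]

def blockWeight (α m : Fin N → ℕ) (x : BlockIndex α m) : ℤ ×ₗ ℕ :=
  toLex ((x.2.1 : ℤ) - α x.1, α x.1)

theorem toLex_sub_lt_toLex_sub {a b i j : ℕ} (hij : i + (b - min a b) ≤ j) (hne : a ≠ b ∨ i ≠ j) :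
    toLex ((i : ℤ) - a, a) < toLex ((j : ℤ) - b, b) := by
  rw [Prod.Lex.toLex_lt_toLex]
  omega

theorem IsForm0T0.sub {X Y : Matrix (BlockIndex α m) (BlockIndex α m) ℂ}
    (hX : IsForm0T0 α m X) (hY : IsForm0T0 α m Y) : IsForm0T0 α m (X - Y) := by
  obtain ⟨A, hA⟩ := hX
  obtain ⟨B, hB⟩ := hY
  refine ⟨fun r s k => A r s k - B r s k, fun r s i j a b => ?_⟩
  rw [Matrix.sub_apply, hA, hB]
  split_ifs <;> simp

theorem isForm0T0_one : IsForm0T0 α m 1 := by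
  refine ⟨fun r s k a b => if r = s ∧ k = 0 ∧ (a : ℕ) = b then 1 else 0, fun r s i j a b => ?_⟩
  rw [one_apply]
  by_cases hrs : r = s
  · subst hrs
    simp only [Sigma.mk.inj_iff, heq_eq_eq, Prod.ext_iff, Fin.ext_iff, true_and, min_self,
      Nat.sub_self, add_zero]
    split_ifs <;> first | rfl | (exfalso; omega)
  · simp [hrs]

theorem IsForm0T0.blockWeight_lt {X : Matrix (BlockIndex α m) (BlockIndex α m) ℂ}
    (hα : Function.Injective α) (hX : IsForm0T0 α m X)
    (hdiag : ∀ (r : Fin N) (i : Fin (α r)) (a b : Fin (m r)), X ⟨r, (i, a)⟩ ⟨r, (i, b)⟩ = 0)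
    (x y : BlockIndex α m) (hxy : X x y ≠ 0) : blockWeight α m x < blockWeight α m y := by
  obtain ⟨A, hA⟩ := hX
  obtain ⟨r, i, a⟩ := x
  obtain ⟨s, j, b⟩ := y
  have hij : (i : ℕ) + (α s - min (α r) (α s)) ≤ j := by
    by_contra h
    exact hxy (by rw [hA, if_neg h])
  refine toLex_sub_lt_toLex_sub hij ?_
  by_contra! h
  obtain rfl := hα h.1
  obtain rfl := Fin.ext h.2
  exact hxy (hdiag r i a b)

theorem IsForm0T0.pow_card_eq_zero {X : Matrix (BlockIndex α m) (BlockIndex α m) ℂ}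
    (hα : Function.Injective α) (hX : IsForm0T0 α m X)
    (hdiag : ∀ (r : Fin N) (i : Fin (α r)) (a b : Fin (m r)), X ⟨r, (i, a)⟩ ⟨r, (i, b)⟩ = 0) :
    X ^ (∑ r : Fin N, α r * m r) = 0 := by
  rw [← card_blockIndex]
  exact pow_card_eq_zero_of_apply_ne_zero_lt X (blockWeight α m) (hX.blockWeight_lt hα hdiag)

end Form0T0

theorem stmt8_general (N : ℕ) (α m : Fin N → ℕ)
    (hαa : StrictAnti α) :
    (∀ M : Matrix (Σ r : Fin N, Fin (α r) × Fin (m r))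
        (Σ r : Fin N, Fin (α r) × Fin (m r)) ℂ,
      IsForm0T0 α m M →
      (∀ (r : Fin N) (i : Fin (α r)) (a b : Fin (m r)), M ⟨r, (i, a)⟩ ⟨r, (i, b)⟩ = 0) →
      M ^ (∑ r : Fin N, α r * m r) = 0) ∧
    (∀ U : Matrix (Σ r : Fin N, Fin (α r) × Fin (m r))
        (Σ r : Fin N, Fin (α r) × Fin (m r)) ℂ,
      IsForm0T0 α m U →
      (∀ (r : Fin N) (i : Fin (α r)) (a b : Fin (m r)),
        U ⟨r, (i, a)⟩ ⟨r, (i, b)⟩ = if a = b then 1 else 0) →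
      (U - 1) ^ (∑ r : Fin N, α r * m r) = 0) := by
  refine ⟨fun M hM hdiag => hM.pow_card_eq_zero hαa.injective hdiag,
    fun U hU hdiag => (hU.sub isForm0T0_one).pow_card_eq_zero hαa.injective ?_⟩
  intro r i a b
  simp [Matrix.sub_apply, hdiag, one_apply]

/-- A matrix of form (0T0) whose diagonal blocks have vanishing leading
Toeplitz coefficient is nilpotent (`M^n = 0` for `n` the size); consequently any matrix
of form (0T0) whose diagonal blocks have leading Toeplitz coefficient `I` is unipotent:
`(U − 1)^n = 0`. -/
theorem stmt8 (N : ℕ) (α m : Fin N → ℕ)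
    (hαa : StrictAnti α) (hα1 : ∀ r, 0 < α r) (hm : ∀ r, 0 < m r) :
    (∀ M : Matrix (Σ r : Fin N, Fin (α r) × Fin (m r))
        (Σ r : Fin N, Fin (α r) × Fin (m r)) ℂ,
      IsForm0T0 α m M →
      (∀ (r : Fin N) (i : Fin (α r)) (a b : Fin (m r)), M ⟨r, (i, a)⟩ ⟨r, (i, b)⟩ = 0) →
      M ^ (∑ r : Fin N, α r * m r) = 0) ∧
    (∀ U : Matrix (Σ r : Fin N, Fin (α r) × Fin (m r))
        (Σ r : Fin N, Fin (α r) × Fin (m r)) ℂ,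
      IsForm0T0 α m U →
      (∀ (r : Fin N) (i : Fin (α r)) (a b : Fin (m r)),
        U ⟨r, (i, a)⟩ ⟨r, (i, b)⟩ = if a = b then 1 else 0) →
      (U - 1) ^ (∑ r : Fin N, α r * m r) = 0) :=
  stmt8_general N α m hαa
end
end
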